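/- arXiv:2502.18242 — 2 statements merged into one kernel-verified Lean document; each statement's English description precedes it below -/
import Mathlib

section
/- Under the setup of full column rank X̃_j ∈ ℝ^{n×(k+1)} and positive definite V_j(τ), the instrumental-variables estimator using the optimal instrument Z_j* = (X̃_j V_j X̃_j')⁺ X_j, i.e. δ̂ = (Σ_j X_j'(X̃_j V_j X̃_j')⁺ X_j)⁻¹ Σ_j X_j'(X̃_j V_j X̃_j')⁺ Ŷ_j, coincides with the efficient minimum distance estimator δ̂ = (Σ_j R_j' V_j⁻¹ R_j)⁻¹ Σ_j R_j' V_j⁻¹ β̂_j, where X_j = X̃_j R_j and Ŷ_j = X̃_j β̂_j. -/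
open Matrix

lemma key_lemma {n k : ℕ} (Xt : Matrix (Fin n) (Fin (k + 1)) ℝ)
    (V : Matrix (Fin (k + 1)) (Fin (k + 1)) ℝ) (G : Matrix (Fin n) (Fin n) ℝ)
    (hXt : IsUnit (Xtᵀ * Xt).det) (hV : V.PosDef)
    (h1 : (Xt * V * Xtᵀ) * G * (Xt * V * Xtᵀ) = Xt * V * Xtᵀ) :
    Xtᵀ * (G * Xt) = V⁻¹ := by
  have hVd : IsUnit V.det := isUnit_iff_ne_zero.mpr hV.det_pos.ne'
  have e1 : (Xtᵀ * Xt)⁻¹ * (Xtᵀ * Xt) = 1 := Matrix.nonsing_inv_mul _ hXt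
  have e2 : (Xtᵀ * Xt) * (Xtᵀ * Xt)⁻¹ = 1 := Matrix.mul_nonsing_inv _ hXt
  have hv1 : V⁻¹ * V = 1 := Matrix.nonsing_inv_mul _ hVd
  have hv2 : V * V⁻¹ = 1 := Matrix.mul_nonsing_inv _ hVd
  -- cancel Xt on the left and Xtᵀ on the right
  have h2 := congrArg (fun M => (Xtᵀ * Xt)⁻¹ * (Xtᵀ * M * (Xt * (Xtᵀ * Xt)⁻¹))) h1
  simp only [Matrix.mul_assoc] at h2
  rw [show Xtᵀ * (Xt * (Xtᵀ * Xt)⁻¹) = 1 from by rw [← Matrix.mul_assoc, e2]] at h2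
  simp only [Matrix.mul_one] at h2
  rw [show (Xtᵀ * Xt)⁻¹ * (Xtᵀ * (Xt * (V * (Xtᵀ * (G * (Xt * V)))))) =
        ((Xtᵀ * Xt)⁻¹ * (Xtᵀ * Xt)) * (V * (Xtᵀ * (G * (Xt * V)))) from by
      simp only [Matrix.mul_assoc],
      show (Xtᵀ * Xt)⁻¹ * (Xtᵀ * (Xt * V)) = ((Xtᵀ * Xt)⁻¹ * (Xtᵀ * Xt)) * V from by
      simp only [Matrix.mul_assoc],
      e1, Matrix.one_mul, Matrix.one_mul] at h2
  -- h2 : V * (Xtᵀ * (G * (Xt * V))) = V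
  have h3 := congrArg (fun M => V⁻¹ * M * V⁻¹) h2
  rw [← Matrix.mul_assoc, hv1, Matrix.one_mul] at h3
  rw [show Xtᵀ * (G * (Xt * V)) * V⁻¹ = Xtᵀ * (G * Xt) * (V * V⁻¹) from by
      simp only [Matrix.mul_assoc], hv2, Matrix.mul_one, Matrix.one_mul] at h3
  exact h3

/-- `B` is the Moore–Penrose pseudoinverse of `A`. -/
def IsMoorePenrose {n m : ℕ} (A : Matrix (Fin n) (Fin m) ℝ)
    (B : Matrix (Fin m) (Fin n) ℝ) : Prop :=
  A * B * A = A ∧ B * A * B = B ∧ (A * B)ᵀ = A * B ∧ (B * A)ᵀ = B * A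

/-- With full column rank `X̃_j`, positive definite `V_j`, `X_j = X̃_jR_j`
and `Ŷ_j = X̃_jβ̂_j`, the IV estimator with optimal instrument `Z_j* = (X̃_jV_jX̃_j')⁺X_j`
coincides with the efficient minimum distance estimator. -/
theorem stmt_5 (m n k K : ℕ)
    (Xt : Fin m → Matrix (Fin n) (Fin (k + 1)) ℝ)
    (V : Fin m → Matrix (Fin (k + 1)) (Fin (k + 1)) ℝ)
    (R : Fin m → Matrix (Fin (k + 1)) (Fin K) ℝ)
    (βh : Fin m → Matrix (Fin (k + 1)) (Fin 1) ℝ)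
    (G : Fin m → Matrix (Fin n) (Fin n) ℝ)
    (hXt : ∀ j, IsUnit ((Xt j)ᵀ * Xt j).det)
    (hrank : ∀ j, (Xt j).rank = k + 1)
    (hV : ∀ j, (V j).PosDef)
    (hG : ∀ j, IsMoorePenrose (Xt j * V j * (Xt j)ᵀ) (G j))
    (hinv1 : IsUnit (∑ j, (Xt j * R j)ᵀ * (G j * (Xt j * R j))).det)
    (hinv2 : IsUnit (∑ j, (R j)ᵀ * ((V j)⁻¹ * R j)).det) :
    (∑ j, (Xt j * R j)ᵀ * (G j * (Xt j * R j)))⁻¹ *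
        (∑ j, (Xt j * R j)ᵀ * (G j * (Xt j * βh j))) =
      (∑ j, (R j)ᵀ * ((V j)⁻¹ * R j))⁻¹ * (∑ j, (R j)ᵀ * ((V j)⁻¹ * βh j)) := by
  have hkey : ∀ j, (Xt j)ᵀ * (G j * Xt j) = (V j)⁻¹ := fun j =>
    key_lemma (Xt j) (V j) (G j) (hXt j) (hV j) (hG j).1
  have hterm : ∀ (L : ℕ) (P : Fin m → Matrix (Fin (k + 1)) (Fin L) ℝ) (j : Fin m),
      (Xt j * R j)ᵀ * (G j * (Xt j * P j)) = (R j)ᵀ * ((V j)⁻¹ * P j) := by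
    intro L P j
    rw [Matrix.transpose_mul,
        show (R j)ᵀ * (Xt j)ᵀ * (G j * (Xt j * P j)) =
          (R j)ᵀ * (((Xt j)ᵀ * (G j * Xt j)) * P j) from by simp only [Matrix.mul_assoc],
        hkey j]
  simp only [hterm K R, hterm 1 βh, hterm K (fun j => R j) , hterm 1 (fun j => βh j)]
end

section
/- Let Ω_mn = [[Ω₁₁/n, Ω₁₂/n],[Ω₂₁/n, Ω₁₂₂/n + Ω₂₂]] be a symmetric positive definite L×L matrix partitioned conformably with L₁ + L₂ = L, where the (2,2) block dominates: ‖Ω₂₂‖ may be of any magnitude relative to 1/n. Define a_n = (1 + n‖Ω₂₂‖)⁻¹ (up to constants). Then the inverse W = n⁻¹Ω_mn⁻¹ admits the representation W = [[Ψ, −ΨΩ̃₁₂Ω̃₂₂⁻¹],[−Ω̃₂₂⁻¹Ω̃₂₁Ψ, n⁻¹Ω̃₂₂⁻¹ + Ω̃₂₂⁻¹Ω̃₂₁ΨΩ̃₁₂Ω̃₂₂⁻¹]] with Ψ = (Ω₁₁ − n⁻¹Ω₁₂Ω̃₂₂⁻¹Ω₂₁)⁻¹ and Ω̃₂₂ the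 (2,2) block, Ω̃₁₂ = Ω₁₂/n; and the (1,2), (2,1), (2,2) blocks of W are O(a_n^{1/2}), O(a_n^{1/2}), O(a_n) respectively while the (1,1) block converges to a fixed positive definite matrix as n → ∞ with ‖Ω₂₂‖ bounded away from 0. -/
open Matrix Filter

attribute [local instance] Matrix.normedAddCommGroup
attribute [local instance] Matrix.normedSpace

/-- `Ω̃₂₂ = Ω₁₂₂/n + Ω₂₂`, the (2,2) block of `Ω_mn`. -/
noncomputable def Etil {L₂ : ℕ} (Ω122 Ω22 : Matrix (Fin L₂) (Fin L₂) ℝ) (n : ℕ) :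
    Matrix (Fin L₂) (Fin L₂) ℝ :=
  ((n : ℝ))⁻¹ • Ω122 + Ω22

/-- `Ψ = (Ω₁₁ − n⁻¹Ω₁₂Ω̃₂₂⁻¹Ω₂₁)⁻¹`. -/
noncomputable def Psi {L₁ L₂ : ℕ} (Ω11 : Matrix (Fin L₁) (Fin L₁) ℝ)
    (Ω12 : Matrix (Fin L₁) (Fin L₂) ℝ) (Ω122 Ω22 : Matrix (Fin L₂) (Fin L₂) ℝ)
    (n : ℕ) : Matrix (Fin L₁) (Fin L₁) ℝ :=
  (Ω11 - ((n : ℝ))⁻¹ • (Ω12 * (Etil Ω122 Ω22 n)⁻¹ * Ω12ᵀ))⁻¹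

/-- Submultiplicativity (up to the inner dimension) of the entrywise sup norm. -/
theorem norm_matmul_le {a b c : ℕ} (A : Matrix (Fin a) (Fin b) ℝ)
    (B : Matrix (Fin b) (Fin c) ℝ) : ‖A * B‖ ≤ (b : ℝ) * ‖A‖ * ‖B‖ := by
  rw [Matrix.norm_le_iff (by positivity)]
  intro i j
  calc ‖(A * B) i j‖ = ‖∑ k, A i k * B k j‖ := by rw [Matrix.mul_apply]
    _ ≤ ∑ k, ‖A i k * B k j‖ := norm_sum_le _ _
    _ ≤ ∑ _k : Fin b, ‖A‖ * ‖B‖ := by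
        refine Finset.sum_le_sum fun k _ => ?_
        rw [norm_mul]
        exact mul_le_mul (Matrix.norm_entry_le_entrywise_sup_norm A)
          (Matrix.norm_entry_le_entrywise_sup_norm B) (norm_nonneg _) (norm_nonneg _)
    _ = (b : ℝ) * ‖A‖ * ‖B‖ := by
        simp [Finset.sum_const, mul_assoc]

theorem norm_matmul3_le {a b c d : ℕ} (X : Matrix (Fin a) (Fin b) ℝ)
    (Y : Matrix (Fin b) (Fin c) ℝ) (Z : Matrix (Fin c) (Fin d) ℝ) :
    ‖X * Y * Z‖ ≤ (b : ℝ) * (c : ℝ) * ‖X‖ * ‖Y‖ * ‖Z‖ := by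
  calc ‖X * Y * Z‖ ≤ (c : ℝ) * ‖X * Y‖ * ‖Z‖ := norm_matmul_le _ _
    _ ≤ (c : ℝ) * ((b : ℝ) * ‖X‖ * ‖Y‖) * ‖Z‖ := by
        have h := norm_matmul_le X Y
        have hc : (0:ℝ) ≤ (c:ℝ) := by positivity
        exact mul_le_mul_of_nonneg_right (mul_le_mul_of_nonneg_left h hc) (norm_nonneg _)
    _ = (b : ℝ) * (c : ℝ) * ‖X‖ * ‖Y‖ * ‖Z‖ := by ring

theorem tendsto_inv_matrix {k : ℕ} {f : ℕ → Matrix (Fin k) (Fin k) ℝ}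
    {A : Matrix (Fin k) (Fin k) ℝ} (hA : IsUnit A.det)
    (hf : Tendsto f atTop (nhds A)) : Tendsto (fun n => (f n)⁻¹) atTop (nhds A⁻¹) := by
  have hc : ContinuousAt Ring.inverse A.det := by
    have := NormedRing.inverse_continuousAt hA.unit
    simpa using this
  exact ((continuousAt_matrix_inv A hc).tendsto).comp hf

theorem key1 (n : ℕ) (hn : 1 ≤ n) (r : ℝ) (hr : 0 ≤ r) :
    ((n : ℝ))⁻¹ ≤ (1 + r) * (1 + (n : ℝ) * r)⁻¹ := by
  have hn1 : (1 : ℝ) ≤ (n : ℝ) := by exact_mod_cast hn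
  have h1 : (0 : ℝ) < (n : ℝ) := by linarith
  have h2 : (0 : ℝ) < 1 + (n : ℝ) * r := by nlinarith
  rw [inv_eq_one_div, ← div_eq_mul_inv, div_le_div_iff₀ h1 h2]
  nlinarith

theorem key2 (n : ℕ) (hn : 1 ≤ n) (r : ℝ) (hr : 0 ≤ r) :
    ((n : ℝ))⁻¹ ≤ (1 + r) * Real.sqrt ((1 + (n : ℝ) * r)⁻¹) := by
  have hn1 : (1 : ℝ) ≤ (n : ℝ) := by exact_mod_cast hn
  have h1 : (0 : ℝ) < (n : ℝ) := by linarith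
  have h2 : (0 : ℝ) < 1 + (n : ℝ) * r := by nlinarith
  have key : ((n : ℝ))⁻¹ / (1 + r) ≤ Real.sqrt ((1 + (n : ℝ) * r)⁻¹) := by
    rw [show ((n:ℝ))⁻¹ / (1 + r) = Real.sqrt ((((n:ℝ))⁻¹ / (1 + r))^2) from
      (Real.sqrt_sq (by positivity)).symm]
    apply Real.sqrt_le_sqrt
    have heq : (((n:ℝ))⁻¹ / (1 + r)) ^ 2 = ((n:ℝ) ^ 2 * (1 + r) ^ 2)⁻¹ := by
      rw [div_pow, inv_pow, div_eq_mul_inv, ← mul_inv]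
    rw [heq]
    apply inv_anti₀ h2
    nlinarith [sq_nonneg ((n:ℝ) - 1), sq_nonneg ((n:ℝ)*r), sq_nonneg r]
  calc ((n : ℝ))⁻¹ = (1 + r) * (((n : ℝ))⁻¹ / (1 + r)) := by field_simp
    _ ≤ (1 + r) * Real.sqrt ((1 + (n : ℝ) * r)⁻¹) := by
        have : (0:ℝ) < 1 + r := by linarith
        exact mul_le_mul_of_nonneg_left key (by linarith)

theorem rate {B x m z X Z : ℝ} (hx : x ≤ X) (hz : z ≤ Z) (h0B : 0 ≤ B) (h0m : 0 ≤ m)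
    (h0z : 0 ≤ z) (h0X : 0 ≤ X) : B * x * m * z ≤ B * X * m * Z := by
  have h1 : B * x ≤ B * X := mul_le_mul_of_nonneg_left hx h0B
  have h2 : B * x * m ≤ B * X * m := mul_le_mul_of_nonneg_right h1 h0m
  exact mul_le_mul h2 hz h0z (by positivity)

/-- Structure of the efficient weighting matrix `W = n⁻¹Ω_mn⁻¹`: exact
partitioned-inverse representation, convergence of the (1,1) block to the fixed positive
definite matrix `Ω₁₁⁻¹`, and the rates `O(√a_n)`, `O(√a_n)`, `O(a_n)` for the (1,2),
(2,1) and (2,2) blocks, where `a_n = (1 + n‖Ω₂₂‖)⁻¹`. -/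
theorem stmt_19 (L₁ L₂ : ℕ)
    (Ω11 : Matrix (Fin L₁) (Fin L₁) ℝ) (hΩ11 : Ω11.PosDef)
    (Ω12 : Matrix (Fin L₁) (Fin L₂) ℝ)
    (Ω122 : Matrix (Fin L₂) (Fin L₂) ℝ) (hΩ122 : Ω122.PosSemidef)
    (Ω22 : Matrix (Fin L₂) (Fin L₂) ℝ) (hΩ22 : Ω22.PosDef)
    (hΩmn : ∀ n : ℕ, 1 ≤ n →
      (Matrix.fromBlocks (((n : ℝ))⁻¹ • Ω11) (((n : ℝ))⁻¹ • Ω12)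
        (((n : ℝ))⁻¹ • Ω12ᵀ) (Etil Ω122 Ω22 n)).PosDef)
    (hE : ∀ n : ℕ, 1 ≤ n → IsUnit (Etil Ω122 Ω22 n).det)
    (hSchur : ∀ n : ℕ, 1 ≤ n →
      IsUnit (Ω11 - ((n : ℝ))⁻¹ • (Ω12 * (Etil Ω122 Ω22 n)⁻¹ * Ω12ᵀ)).det) :
    (∀ n : ℕ, 1 ≤ n →
      ((n : ℝ))⁻¹ •
          (Matrix.fromBlocks (((n : ℝ))⁻¹ • Ω11) (((n : ℝ))⁻¹ • Ω12)
            (((n : ℝ))⁻¹ • Ω12ᵀ) (Etil Ω122 Ω22 n))⁻¹ =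
        Matrix.fromBlocks
          (Psi Ω11 Ω12 Ω122 Ω22 n)
          (-(Psi Ω11 Ω12 Ω122 Ω22 n * (((n : ℝ))⁻¹ • Ω12) * (Etil Ω122 Ω22 n)⁻¹))
          (-((Etil Ω122 Ω22 n)⁻¹ * (((n : ℝ))⁻¹ • Ω12ᵀ) * Psi Ω11 Ω12 Ω122 Ω22 n))
          (((n : ℝ))⁻¹ • (Etil Ω122 Ω22 n)⁻¹ +
            (Etil Ω122 Ω22 n)⁻¹ * (((n : ℝ))⁻¹ • Ω12ᵀ) * Psi Ω11 Ω12 Ω122 Ω22 n *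
              (((n : ℝ))⁻¹ • Ω12) * (Etil Ω122 Ω22 n)⁻¹)) ∧
    Tendsto (fun n : ℕ => Psi Ω11 Ω12 Ω122 Ω22 n) atTop (nhds Ω11⁻¹) ∧
    (Ω11⁻¹).PosDef ∧
    (∃ c : ℝ, 0 < c ∧ ∀ n : ℕ, 1 ≤ n →
      ‖-(Psi Ω11 Ω12 Ω122 Ω22 n * (((n : ℝ))⁻¹ • Ω12) * (Etil Ω122 Ω22 n)⁻¹)‖ ≤
          c * Real.sqrt ((1 + (n : ℝ) * ‖Ω22‖)⁻¹) ∧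
        ‖-((Etil Ω122 Ω22 n)⁻¹ * (((n : ℝ))⁻¹ • Ω12ᵀ) * Psi Ω11 Ω12 Ω122 Ω22 n)‖ ≤
          c * Real.sqrt ((1 + (n : ℝ) * ‖Ω22‖)⁻¹) ∧
        ‖((n : ℝ))⁻¹ • (Etil Ω122 Ω22 n)⁻¹ +
            (Etil Ω122 Ω22 n)⁻¹ * (((n : ℝ))⁻¹ • Ω12ᵀ) * Psi Ω11 Ω12 Ω122 Ω22 n *
              (((n : ℝ))⁻¹ • Ω12) * (Etil Ω122 Ω22 n)⁻¹‖ ≤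
          c * (1 + (n : ℝ) * ‖Ω22‖)⁻¹) := by
  -- convergence facts
  have hfrac : Tendsto (fun n : ℕ => ((n : ℝ))⁻¹) atTop (nhds 0) :=
    tendsto_inv_atTop_nhds_zero_nat
  have hEt : Tendsto (fun n : ℕ => Etil Ω122 Ω22 n) atTop (nhds Ω22) := by
    have := (hfrac.smul_const Ω122).add_const Ω22
    simpa [Etil] using this
  have hEinv : Tendsto (fun n : ℕ => (Etil Ω122 Ω22 n)⁻¹) atTop (nhds Ω22⁻¹) :=
    tendsto_inv_matrix hΩ22.det_pos.ne'.isUnit hEt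
  have hprod : Tendsto (fun n : ℕ => Ω12 * (Etil Ω122 Ω22 n)⁻¹ * Ω12ᵀ) atTop
      (nhds (Ω12 * Ω22⁻¹ * Ω12ᵀ)) := by
    have hcont : Continuous fun M : Matrix (Fin L₂) (Fin L₂) ℝ => Ω12 * M * Ω12ᵀ :=
      (continuous_const.matrix_mul continuous_id).matrix_mul continuous_const
    exact (hcont.continuousAt.tendsto).comp hEinv
  have hSt : Tendsto (fun n : ℕ => Ω11 - ((n : ℝ))⁻¹ • (Ω12 * (Etil Ω122 Ω22 n)⁻¹ * Ω12ᵀ))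
      atTop (nhds Ω11) := by
    have := tendsto_const_nhds.sub (f := fun _ : ℕ => Ω11) (hfrac.smul hprod)
    simpa using this
  have hPsiT : Tendsto (fun n : ℕ => Psi Ω11 Ω12 Ω122 Ω22 n) atTop (nhds Ω11⁻¹) := by
    have := tendsto_inv_matrix hΩ11.det_pos.ne'.isUnit hSt
    simpa [Psi] using this
  refine ⟨?_, hPsiT, hΩ11.inv, ?_⟩
  · -- exact block-inverse representation
    intro n hn
    have hn0 : ((n : ℝ)) ≠ 0 := Nat.cast_ne_zero.mpr (by omega)
    set En : Matrix (Fin L₂) (Fin L₂) ℝ := Etil Ω122 Ω22 n with hEn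
    set P : Matrix (Fin L₁) (Fin L₁) ℝ := Psi Ω11 Ω12 Ω122 Ω22 n with hP
    have hEE : En * En⁻¹ = 1 := Matrix.mul_nonsing_inv _ (hE n hn)
    have hSP : (Ω11 - ((n : ℝ))⁻¹ • (Ω12 * En⁻¹ * Ω12ᵀ)) * P = 1 :=
      Matrix.mul_nonsing_inv _ (hSchur n hn)
    have hSP' : Ω11 * P = 1 + ((n : ℝ))⁻¹ • (Ω12 * (En⁻¹ * (Ω12ᵀ * P))) := by
      have h2 : Ω11 * P - ((n : ℝ))⁻¹ • (Ω12 * (En⁻¹ * (Ω12ᵀ * P))) = 1 := by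
        simpa [Matrix.sub_mul, Matrix.smul_mul, Matrix.mul_assoc] using hSP
      linear_combination (norm := abel) h2
    have hEc : ∀ (k : ℕ) (X : Matrix (Fin L₂) (Fin k) ℝ), En * (En⁻¹ * X) = X := fun k X => by
      rw [← Matrix.mul_assoc, hEE, Matrix.one_mul]
    have hSP'' : ∀ X : Matrix (Fin L₁) (Fin L₂) ℝ,
        Ω11 * (P * X) = X + ((n : ℝ))⁻¹ • (Ω12 * (En⁻¹ * (Ω12ᵀ * (P * X)))) := by
      intro X
      have := congrArg (· * X) hSP'
      simpa [Matrix.add_mul, Matrix.smul_mul, Matrix.one_mul, Matrix.mul_assoc] using this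
    have e1 : (n : ℝ) * (((n : ℝ))⁻¹ * ((n : ℝ))⁻¹) * ((n : ℝ))⁻¹ = ((n : ℝ))⁻¹ * ((n : ℝ))⁻¹ := by
      field_simp
    have e2 : (n : ℝ) * (((n : ℝ))⁻¹ * ((n : ℝ))⁻¹) = ((n : ℝ))⁻¹ := by
      field_simp
    have key : (Matrix.fromBlocks (((n : ℝ))⁻¹ • Ω11) (((n : ℝ))⁻¹ • Ω12)
        (((n : ℝ))⁻¹ • Ω12ᵀ) En)⁻¹ =
        (n : ℝ) • Matrix.fromBlocks
            P
            (-(P * (((n : ℝ))⁻¹ • Ω12) * En⁻¹))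
            (-(En⁻¹ * (((n : ℝ))⁻¹ • Ω12ᵀ) * P))
            (((n : ℝ))⁻¹ • En⁻¹ +
              En⁻¹ * (((n : ℝ))⁻¹ • Ω12ᵀ) * P * (((n : ℝ))⁻¹ • Ω12) * En⁻¹) := by
      apply Matrix.inv_eq_right_inv
      rw [Matrix.fromBlocks_smul, Matrix.fromBlocks_multiply, ← Matrix.fromBlocks_one,
        Matrix.fromBlocks_inj]
      refine ⟨?_, ?_, ?_, ?_⟩
      · simp only [Matrix.smul_mul, Matrix.mul_smul, smul_smul, smul_neg, Matrix.mul_neg,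
          Matrix.mul_assoc, inv_mul_cancel₀ hn0, mul_inv_cancel₀ hn0, e1, e2, one_smul, hSP']
        abel
      · simp only [Matrix.smul_mul, Matrix.mul_smul, smul_smul, smul_neg, Matrix.mul_neg,
          Matrix.mul_assoc, inv_mul_cancel₀ hn0, mul_inv_cancel₀ hn0, e1, e2, one_smul,
          smul_add, Matrix.mul_add, hSP', Matrix.add_mul, Matrix.one_mul, hSP'']
        abel
      · simp only [Matrix.smul_mul, Matrix.mul_smul, smul_smul, smul_neg, Matrix.mul_neg,
          Matrix.mul_assoc, inv_mul_cancel₀ hn0, mul_inv_cancel₀ hn0, e1, e2, one_smul, hEc]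
        abel
      · simp only [Matrix.smul_mul, Matrix.mul_smul, smul_smul, smul_neg, Matrix.mul_neg,
          Matrix.mul_assoc, inv_mul_cancel₀ hn0, mul_inv_cancel₀ hn0, one_smul, smul_add,
          Matrix.mul_add, hEc, hEE, e1, e2]
        abel
    rw [key, smul_smul, inv_mul_cancel₀ hn0, one_smul]
  · -- the rates
    obtain ⟨CE, hCE⟩ : ∃ C : ℝ, ∀ n : ℕ, ‖(Etil Ω122 Ω22 n)⁻¹‖ ≤ C := by
      obtain ⟨C, hC⟩ := hEinv.norm.bddAbove_range
      exact ⟨C, fun n => hC (Set.mem_range_self n)⟩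
    obtain ⟨CP, hCP⟩ : ∃ C : ℝ, ∀ n : ℕ, ‖Psi Ω11 Ω12 Ω122 Ω22 n‖ ≤ C := by
      obtain ⟨C, hC⟩ := hPsiT.norm.bddAbove_range
      exact ⟨C, fun n => hC (Set.mem_range_self n)⟩
    have hCE0 : 0 ≤ CE := le_trans (norm_nonneg _) (hCE 0)
    have hCP0 : 0 ≤ CP := le_trans (norm_nonneg _) (hCP 0)
    obtain ⟨B1, hB1⟩ : ∃ B : ℝ, (L₁ : ℝ) * (L₂ : ℝ) * CP * ‖Ω12‖ * CE = B := ⟨_, rfl⟩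
    obtain ⟨B2, hB2⟩ : ∃ B : ℝ, (L₂ : ℝ) * (L₁ : ℝ) * CE * ‖Ω12ᵀ‖ * CP = B := ⟨_, rfl⟩
    obtain ⟨B3, hB3⟩ : ∃ B : ℝ, CE + (L₁ : ℝ) * (L₂ : ℝ) * B2 * ‖Ω12‖ * CE = B := ⟨_, rfl⟩
    have hr0 : 0 ≤ ‖Ω22‖ := norm_nonneg _
    have hB10 : 0 ≤ B1 := by
      rw [← hB1]
      exact mul_nonneg (mul_nonneg (mul_nonneg (mul_nonneg (by positivity) (by positivity))
        hCP0) (norm_nonneg _)) hCE0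
    have hB20 : 0 ≤ B2 := by
      rw [← hB2]
      exact mul_nonneg (mul_nonneg (mul_nonneg (mul_nonneg (by positivity) (by positivity))
        hCE0) (norm_nonneg _)) hCP0
    have hB30 : 0 ≤ B3 := by
      rw [← hB3]
      exact add_nonneg hCE0 (mul_nonneg (mul_nonneg (mul_nonneg (mul_nonneg (by positivity)
        (by positivity)) hB20) (norm_nonneg _)) hCE0)
    have hsmulnorm : ∀ (n : ℕ) (a b : ℕ) (M : Matrix (Fin a) (Fin b) ℝ),
        ‖((n : ℝ))⁻¹ • M‖ = ((n : ℝ))⁻¹ * ‖M‖ := by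
      intro n a b M
      rw [norm_smul, Real.norm_eq_abs, abs_of_nonneg (by positivity)]
    -- per-block n⁻¹ rates
    have hinvle1 : ∀ n : ℕ, 1 ≤ n → ((n : ℝ))⁻¹ ≤ 1 := fun n hn => by
      have hn1 : (1 : ℝ) ≤ (n : ℝ) := by exact_mod_cast hn
      rw [inv_le_one_iff₀]; right; exact hn1
    have h12 : ∀ n : ℕ, 1 ≤ n →
        ‖Psi Ω11 Ω12 Ω122 Ω22 n * (((n : ℝ))⁻¹ • Ω12) * (Etil Ω122 Ω22 n)⁻¹‖ ≤
          B1 * ((n : ℝ))⁻¹ := by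
      intro n hn
      calc ‖Psi Ω11 Ω12 Ω122 Ω22 n * (((n : ℝ))⁻¹ • Ω12) * (Etil Ω122 Ω22 n)⁻¹‖
          ≤ (L₁ : ℝ) * (L₂ : ℝ) * ‖Psi Ω11 Ω12 Ω122 Ω22 n‖ * ‖((n : ℝ))⁻¹ • Ω12‖ *
            ‖(Etil Ω122 Ω22 n)⁻¹‖ := norm_matmul3_le _ _ _
        _ = (L₁ : ℝ) * (L₂ : ℝ) * ‖Psi Ω11 Ω12 Ω122 Ω22 n‖ * (((n : ℝ))⁻¹ * ‖Ω12‖) *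
            ‖(Etil Ω122 Ω22 n)⁻¹‖ := by rw [hsmulnorm]
        _ ≤ (L₁ : ℝ) * (L₂ : ℝ) * CP * (((n : ℝ))⁻¹ * ‖Ω12‖) * CE :=
            rate (hCP n) (hCE n) (by positivity) (by positivity) (norm_nonneg _) hCP0
        _ = B1 * ((n : ℝ))⁻¹ := by rw [← hB1]; ring
    have h21 : ∀ n : ℕ, 1 ≤ n →
        ‖(Etil Ω122 Ω22 n)⁻¹ * (((n : ℝ))⁻¹ • Ω12ᵀ) * Psi Ω11 Ω12 Ω122 Ω22 n‖ ≤
          B2 * ((n : ℝ))⁻¹ := by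
      intro n hn
      calc ‖(Etil Ω122 Ω22 n)⁻¹ * (((n : ℝ))⁻¹ • Ω12ᵀ) * Psi Ω11 Ω12 Ω122 Ω22 n‖
          ≤ (L₂ : ℝ) * (L₁ : ℝ) * ‖(Etil Ω122 Ω22 n)⁻¹‖ * ‖((n : ℝ))⁻¹ • Ω12ᵀ‖ *
            ‖Psi Ω11 Ω12 Ω122 Ω22 n‖ := norm_matmul3_le _ _ _
        _ = (L₂ : ℝ) * (L₁ : ℝ) * ‖(Etil Ω122 Ω22 n)⁻¹‖ * (((n : ℝ))⁻¹ * ‖Ω12ᵀ‖) *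
            ‖Psi Ω11 Ω12 Ω122 Ω22 n‖ := by rw [hsmulnorm]
        _ ≤ (L₂ : ℝ) * (L₁ : ℝ) * CE * (((n : ℝ))⁻¹ * ‖Ω12ᵀ‖) * CP :=
            rate (hCE n) (hCP n) (by positivity) (by positivity) (norm_nonneg _) hCE0
        _ = B2 * ((n : ℝ))⁻¹ := by rw [← hB2]; ring
    have h22 : ∀ n : ℕ, 1 ≤ n →
        ‖((n : ℝ))⁻¹ • (Etil Ω122 Ω22 n)⁻¹ +
            (Etil Ω122 Ω22 n)⁻¹ * (((n : ℝ))⁻¹ • Ω12ᵀ) * Psi Ω11 Ω12 Ω122 Ω22 n *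
              (((n : ℝ))⁻¹ • Ω12) * (Etil Ω122 Ω22 n)⁻¹‖ ≤ B3 * ((n : ℝ))⁻¹ := by
      intro n hn
      have hT : ‖(Etil Ω122 Ω22 n)⁻¹ * (((n : ℝ))⁻¹ • Ω12ᵀ) * Psi Ω11 Ω12 Ω122 Ω22 n‖ ≤ B2 := by
        calc _ ≤ B2 * ((n : ℝ))⁻¹ := h21 n hn
          _ ≤ B2 * 1 := mul_le_mul_of_nonneg_left (hinvle1 n hn) hB20
          _ = B2 := mul_one _
      calc ‖((n : ℝ))⁻¹ • (Etil Ω122 Ω22 n)⁻¹ +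
            (Etil Ω122 Ω22 n)⁻¹ * (((n : ℝ))⁻¹ • Ω12ᵀ) * Psi Ω11 Ω12 Ω122 Ω22 n *
              (((n : ℝ))⁻¹ • Ω12) * (Etil Ω122 Ω22 n)⁻¹‖
          ≤ ‖((n : ℝ))⁻¹ • (Etil Ω122 Ω22 n)⁻¹‖ +
            ‖(Etil Ω122 Ω22 n)⁻¹ * (((n : ℝ))⁻¹ • Ω12ᵀ) * Psi Ω11 Ω12 Ω122 Ω22 n *
              (((n : ℝ))⁻¹ • Ω12) * (Etil Ω122 Ω22 n)⁻¹‖ := norm_add_le _ _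
        _ ≤ ((n : ℝ))⁻¹ * CE +
            (L₁ : ℝ) * (L₂ : ℝ) *
              ‖(Etil Ω122 Ω22 n)⁻¹ * (((n : ℝ))⁻¹ • Ω12ᵀ) * Psi Ω11 Ω12 Ω122 Ω22 n‖ *
              ‖((n : ℝ))⁻¹ • Ω12‖ * ‖(Etil Ω122 Ω22 n)⁻¹‖ := by
            refine add_le_add ?_ (norm_matmul3_le _ _ _)
            rw [hsmulnorm]
            exact mul_le_mul_of_nonneg_left (hCE n) (by positivity)
        _ = ((n : ℝ))⁻¹ * CE +
            (L₁ : ℝ) * (L₂ : ℝ) *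
              ‖(Etil Ω122 Ω22 n)⁻¹ * (((n : ℝ))⁻¹ • Ω12ᵀ) * Psi Ω11 Ω12 Ω122 Ω22 n‖ *
              (((n : ℝ))⁻¹ * ‖Ω12‖) * ‖(Etil Ω122 Ω22 n)⁻¹‖ := by rw [hsmulnorm]
        _ ≤ ((n : ℝ))⁻¹ * CE +
            (L₁ : ℝ) * (L₂ : ℝ) * B2 * (((n : ℝ))⁻¹ * ‖Ω12‖) * CE := by
            refine add_le_add le_rfl
              (rate hT (hCE n) (by positivity) (by positivity) (norm_nonneg _) hB20)
        _ = B3 * ((n : ℝ))⁻¹ := by rw [← hB3]; ring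
    -- combine with the scalar keys
    refine ⟨(B1 + B2 + B3 + 1) * (1 + ‖Ω22‖), by nlinarith, ?_⟩
    intro n hn
    have hk1 := key1 n hn ‖Ω22‖ hr0
    have hk2 := key2 n hn ‖Ω22‖ hr0
    have hs0 : 0 ≤ Real.sqrt ((1 + (n : ℝ) * ‖Ω22‖)⁻¹) := Real.sqrt_nonneg _
    have hn1 : (1 : ℝ) ≤ (n : ℝ) := by exact_mod_cast hn
    have ha0 : (0 : ℝ) ≤ (1 + (n : ℝ) * ‖Ω22‖)⁻¹ := by positivity
    have hcoef1 : B1 * (1 + ‖Ω22‖) ≤ (B1 + B2 + B3 + 1) * (1 + ‖Ω22‖) :=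
      mul_le_mul_of_nonneg_right (by linarith) (by linarith)
    have hcoef2 : B2 * (1 + ‖Ω22‖) ≤ (B1 + B2 + B3 + 1) * (1 + ‖Ω22‖) :=
      mul_le_mul_of_nonneg_right (by linarith) (by linarith)
    have hcoef3 : B3 * (1 + ‖Ω22‖) ≤ (B1 + B2 + B3 + 1) * (1 + ‖Ω22‖) :=
      mul_le_mul_of_nonneg_right (by linarith) (by linarith)
    refine ⟨?_, ?_, ?_⟩
    · rw [norm_neg]
      calc ‖Psi Ω11 Ω12 Ω122 Ω22 n * (((n : ℝ))⁻¹ • Ω12) * (Etil Ω122 Ω22 n)⁻¹‖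
          ≤ B1 * ((n : ℝ))⁻¹ := h12 n hn
        _ ≤ B1 * ((1 + ‖Ω22‖) * Real.sqrt ((1 + (n : ℝ) * ‖Ω22‖)⁻¹)) :=
            mul_le_mul_of_nonneg_left hk2 hB10
        _ ≤ (B1 + B2 + B3 + 1) * (1 + ‖Ω22‖) * Real.sqrt ((1 + (n : ℝ) * ‖Ω22‖)⁻¹) := by
            rw [← mul_assoc]
            exact mul_le_mul_of_nonneg_right hcoef1 hs0
    · rw [norm_neg]
      calc ‖(Etil Ω122 Ω22 n)⁻¹ * (((n : ℝ))⁻¹ • Ω12ᵀ) * Psi Ω11 Ω12 Ω122 Ω22 n‖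
          ≤ B2 * ((n : ℝ))⁻¹ := h21 n hn
        _ ≤ B2 * ((1 + ‖Ω22‖) * Real.sqrt ((1 + (n : ℝ) * ‖Ω22‖)⁻¹)) :=
            mul_le_mul_of_nonneg_left hk2 hB20
        _ ≤ (B1 + B2 + B3 + 1) * (1 + ‖Ω22‖) * Real.sqrt ((1 + (n : ℝ) * ‖Ω22‖)⁻¹) := by
            rw [← mul_assoc]
            exact mul_le_mul_of_nonneg_right hcoef2 hs0
    · calc ‖((n : ℝ))⁻¹ • (Etil Ω122 Ω22 n)⁻¹ +
            (Etil Ω122 Ω22 n)⁻¹ * (((n : ℝ))⁻¹ • Ω12ᵀ) * Psi Ω11 Ω12 Ω122 Ω22 n *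
              (((n : ℝ))⁻¹ • Ω12) * (Etil Ω122 Ω22 n)⁻¹‖
          ≤ B3 * ((n : ℝ))⁻¹ := h22 n hn
        _ ≤ B3 * ((1 + ‖Ω22‖) * (1 + (n : ℝ) * ‖Ω22‖)⁻¹) := mul_le_mul_of_nonneg_left hk1 hB30
        _ ≤ (B1 + B2 + B3 + 1) * (1 + ‖Ω22‖) * (1 + (n : ℝ) * ‖Ω22‖)⁻¹ := by
            rw [← mul_assoc]
            exact mul_le_mul_of_nonneg_right hcoef3 ha0
end
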